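/- Let θ, φ, α ∈ ℝ. In the quaternions, with u = j·cos θ + k·sin θ, one has exp(φ·u)·exp(-α θ·i) = cos φ · exp(-α θ·i) + sin φ · exp((α+1) θ·i)·j. -/

import Mathlib

/-- The quaternion unit `i`. -/
noncomputable def qi : Quaternion ℝ := ⟨0, 1, 0, 0⟩

/-- The quaternion unit `j`. -/
noncomputable def qj : Quaternion ℝ := ⟨0, 0, 1, 0⟩

/-- The quaternion unit `k`. -/
noncomputable def qk : Quaternion ℝ := ⟨0, 0, 0, 1⟩

/-!
The axis `u = j cos θ + k sin θ` is the rotated unit `exp(θ i) j`, and `j` anticommutes with `i`,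
so `j exp(-αθ i) = exp(αθ i) j`. Expanding `exp(φ u) = cos φ + sin φ · exp(θ i) j` and moving `j`
to the right therefore collects the factors `exp(θ i) exp(αθ i) = exp((α + 1)θ i)`.
-/

open NormedSpace

namespace Quaternion

theorem exp_smul_of_re_eq_zero_of_norm_eq_one {v : ℍ[ℝ]} (hre : v.re = 0) (hv : ‖v‖ = 1)
    (t : ℝ) : exp (t • v) = ↑(Real.cos t) + Real.sin t • v := by
  rw [exp_of_re_eq_zero _ (by simp [hre]), norm_smul, hv, mul_one, Real.norm_eq_abs,
    Real.cos_abs, smul_smul]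
  congr 2
  rcases abs_choice t with h | h <;> rw [h]
  · exact div_mul_cancel_of_imp fun ht => by simp [ht]
  · rw [Real.sin_neg, neg_div_neg_eq]
    exact div_mul_cancel_of_imp fun ht => by simp [ht]

end Quaternion

open Quaternion

theorem norm_qi : ‖qi‖ = 1 := by
  rw [norm_eq_sqrt_real_inner, inner_self, normSq_def']
  simp [qi]

theorem norm_qj : ‖qj‖ = 1 := by
  rw [norm_eq_sqrt_real_inner, inner_self, normSq_def']
  simp [qj]

theorem qi_mul_qj : qi * qj = qk := by
  ext <;> simp only [re_mul, imI_mul, imJ_mul, imK_mul] <;> simp [qi, qj, qk]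

theorem qj_mul_qi : qj * qi = -qk := by
  ext <;> simp only [re_mul, imI_mul, imJ_mul, imK_mul, re_neg, imI_neg, imJ_neg, imK_neg] <;>
    simp [qi, qj, qk]

theorem exp_smul_qi (t : ℝ) : exp (t • qi) = ↑(Real.cos t) + Real.sin t • qi :=
  exp_smul_of_re_eq_zero_of_norm_eq_one rfl norm_qi t

theorem exp_smul_qi_mul_exp_smul_qi (s t : ℝ) :
    exp (s • qi) * exp (t • qi) = exp ((s + t) • qi) := by
  -- `exp_add_of_commute` is stated for normed `ℚ`-algebras.
  let : NormedAlgebra ℚ ℍ[ℝ] := .restrictScalars ℚ ℝ _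
  rw [add_smul, exp_add_of_commute (((Commute.refl qi).smul_left s).smul_right t)]

theorem exp_smul_qi_mul_qj (t : ℝ) : exp (t • qi) * qj = Real.cos t • qj + Real.sin t • qk := by
  rw [exp_smul_qi, add_mul, smul_mul_assoc, qi_mul_qj, coe_mul_eq_smul]

theorem qj_mul_exp_smul_qi (t : ℝ) : qj * exp (t • qi) = exp ((-t) • qi) * qj := by
  rw [exp_smul_qi, exp_smul_qi, mul_add, add_mul, mul_smul_comm, smul_mul_assoc, qj_mul_qi,
    qi_mul_qj, Real.cos_neg, Real.sin_neg, neg_smul, smul_neg, ← coe_commute]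

theorem re_exp_smul_qi_mul_qj (t : ℝ) : (exp (t • qi) * qj).re = 0 := by
  simp [exp_smul_qi_mul_qj, show qj.re = 0 from rfl, show qk.re = 0 from rfl]

theorem norm_exp_smul_qi_mul_qj (t : ℝ) : ‖exp (t • qi) * qj‖ = 1 := by
  simp [norm_qj, show qi.re = 0 from rfl]

/-- The commutation lemma in the quaternions: with `u = j cos θ + k sin θ`,
`exp(φ u) exp(-αθ i) = cos φ · exp(-αθ i) + sin φ · exp((α+1)θ i) j`. -/
theorem quaternion_commutation (θ φ α : ℝ) :
    NormedSpace.exp (φ • (Real.cos θ • qj + Real.sin θ • qk)) *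
        NormedSpace.exp ((-(α * θ)) • qi) =
      (Real.cos φ : Quaternion ℝ) * NormedSpace.exp ((-(α * θ)) • qi) +
        (Real.sin φ : Quaternion ℝ) * (NormedSpace.exp (((α + 1) * θ) • qi) * qj) := by
  rw [← exp_smul_qi_mul_qj]
  calc exp (φ • (exp (θ • qi) * qj)) * exp ((-(α * θ)) • qi)
      = ↑(Real.cos φ) * exp ((-(α * θ)) • qi)
          + ↑(Real.sin φ) * (exp (θ • qi) * (qj * exp ((-(α * θ)) • qi))) := by
        rw [exp_smul_of_re_eq_zero_of_norm_eq_one (re_exp_smul_qi_mul_qj θ)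
          (norm_exp_smul_qi_mul_qj θ), ← coe_mul_eq_smul, add_mul, mul_assoc, mul_assoc]
    _ = ↑(Real.cos φ) * exp ((-(α * θ)) • qi)
          + ↑(Real.sin φ) * (exp (θ • qi) * exp ((α * θ) • qi) * qj) := by
        rw [qj_mul_exp_smul_qi, neg_neg, mul_assoc]
    _ = _ := by rw [exp_smul_qi_mul_exp_smul_qi, add_one_mul, add_comm θ]
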